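/- Let σ_e, σ_d, σ_W > 0, μ_e, μ_d ∈ ℝ, δ = μ_e − μ_d, P̄ > 0. Set A = √(P̄/(δ² + σ_e²)), C = −Aμ_d, K = Aσ_d²/(A²σ_d² + σ_W²), L = μ_d, and for (m,w) ∈ ℝ² define U(m,w) = K(Am + C + w) + L. Then: (i) the integral of (m − U(m,w))² with respect to (gaussianReal μ_e σ_e²) ⊗ (gaussianReal 0 σ_W²) equals σ_W²·(P̄σ_d⁴/(δ² + σ_e²) + (δ² + σ_e²)σ_W²)/(P̄σ_d²/(δ² + σ_e²) + σ_W²)²; and (ii) the integral of (m − U(m,w))² with respect to (gaussianReal μ_d σ_d²) ⊗ (gaussianReal 0 σ_W²) equals σ_d²σ_W²/(P̄σ_d²/(δ² + σ_e²) + σ_W²). -/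

import Mathlib

/-!
Under either product measure, `m - U(m, w) = (1 - K A) m - K w + (K A - 1) μ_d` is an affine image
of two independent Gaussians, hence Gaussian, and its second moment is
`(1 - K A)² ((μ - μ_d)² + σ²) + K² σ_W²`. The closed forms then follow from
`A² = P̄ / (δ² + σ_e²)` and `1 - K A = σ_W² / (A² σ_d² + σ_W²)`.
-/

open MeasureTheory ProbabilityTheory
open scoped NNReal

namespace ProbabilityTheory

lemma integral_sq_gaussianReal (μ : ℝ) (v : ℝ≥0) :
    ∫ x, x ^ 2 ∂gaussianReal μ v = μ ^ 2 + v := by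
  have h := variance_eq_sub (memLp_id_gaussianReal (μ := μ) (v := v) 2)
  simp only [variance_id_gaussianReal, integral_id_gaussianReal, Pi.pow_apply, id] at h
  linarith

lemma gaussianReal_prod_map_affine (μ₁ μ₂ : ℝ) (v₁ v₂ : ℝ≥0) (a b c : ℝ) :
    ((gaussianReal μ₁ v₁).prod (gaussianReal μ₂ v₂)).map (fun p ↦ a * p.1 + b * p.2 + c)
      = gaussianReal (a * μ₁ + b * μ₂ + c)
          (.mk (a ^ 2) (sq_nonneg a) * v₁ + .mk (b ^ 2) (sq_nonneg b) * v₂) := by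
  have hf : (fun p : ℝ × ℝ ↦ a * p.1 + b * p.2 + c)
      = (· + c) ∘ (fun p : ℝ × ℝ ↦ p.1 + p.2) ∘ Prod.map (a * ·) (b * ·) := rfl
  rw [hf, ← Measure.map_map (by fun_prop) (by fun_prop),
    ← Measure.map_map (by fun_prop) (by fun_prop),
    ← Measure.map_prod_map _ _ (by fun_prop) (by fun_prop),
    gaussianReal_map_const_mul, gaussianReal_map_const_mul, ← Measure.conv,
    gaussianReal_conv_gaussianReal, gaussianReal_map_add_const]

lemma integral_affine_sq_gaussianReal_prod (μ₁ μ₂ : ℝ) (v₁ v₂ : ℝ≥0) (a b c : ℝ) :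
    ∫ p, (a * p.1 + b * p.2 + c) ^ 2 ∂(gaussianReal μ₁ v₁).prod (gaussianReal μ₂ v₂)
      = (a * μ₁ + b * μ₂ + c) ^ 2 + a ^ 2 * v₁ + b ^ 2 * v₂ := by
  rw [← integral_map (f := fun y : ℝ ↦ y ^ 2) (by fun_prop) (by fun_prop),
    gaussianReal_prod_map_affine, integral_sq_gaussianReal]
  simp only [NNReal.coe_add, NNReal.coe_mul, NNReal.coe_mk]
  ring

lemma integral_sq_sub_affine_decoder_gaussianReal_prod (μ μd A K : ℝ) (v₁ v₂ : ℝ≥0) :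
    ∫ p, (p.1 - (K * (A * p.1 + -A * μd + p.2) + μd)) ^ 2
        ∂(gaussianReal μ v₁).prod (gaussianReal 0 v₂)
      = (1 - K * A) ^ 2 * ((μ - μd) ^ 2 + v₁) + K ^ 2 * v₂ := by
  have h := integral_affine_sq_gaussianReal_prod μ 0 v₁ v₂ (1 - K * A) (-K) ((K * A - 1) * μd)
  simp only [show ∀ p : ℝ × ℝ, (1 - K * A) * p.1 + -K * p.2 + (K * A - 1) * μd
    = p.1 - (K * (A * p.1 + -A * μd + p.2) + μd) from fun p ↦ by ring] at h
  rw [h]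
  ring

end ProbabilityTheory

theorem stmt14_general (σe σd σW μe μd Pbar : ℝ)
    (hσe : 0 < σe) (hσW : 0 < σW) (hP : 0 < Pbar) :
    let δ : ℝ := μe - μd
    let A : ℝ := Real.sqrt (Pbar / (δ ^ 2 + σe ^ 2))
    let C : ℝ := -A * μd
    let K : ℝ := A * σd ^ 2 / (A ^ 2 * σd ^ 2 + σW ^ 2)
    let L : ℝ := μd
    let U : ℝ × ℝ → ℝ := fun p => K * (A * p.1 + C + p.2) + L
    (∫ p, (p.1 - U p) ^ 2
        ∂((gaussianReal μe ⟨σe ^ 2, sq_nonneg σe⟩).prod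
            (gaussianReal 0 ⟨σW ^ 2, sq_nonneg σW⟩))
      = σW ^ 2 * (Pbar * σd ^ 4 / (δ ^ 2 + σe ^ 2) + (δ ^ 2 + σe ^ 2) * σW ^ 2)
          / (Pbar * σd ^ 2 / (δ ^ 2 + σe ^ 2) + σW ^ 2) ^ 2)
    ∧ (∫ p, (p.1 - U p) ^ 2
        ∂((gaussianReal μd ⟨σd ^ 2, sq_nonneg σd⟩).prod
            (gaussianReal 0 ⟨σW ^ 2, sq_nonneg σW⟩))
      = σd ^ 2 * σW ^ 2 / (Pbar * σd ^ 2 / (δ ^ 2 + σe ^ 2) + σW ^ 2)) := by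
  intro δ A C K L U
  have hA : A ^ 2 = Pbar / (δ ^ 2 + σe ^ 2) := Real.sq_sqrt (by positivity)
  have hgain : 1 - K * A = σW ^ 2 / (A ^ 2 * σd ^ 2 + σW ^ 2) := by
    simp only [K]
    field_simp
    ring
  have hK : K ^ 2 = A ^ 2 * σd ^ 4 / (A ^ 2 * σd ^ 2 + σW ^ 2) ^ 2 := by
    simp only [K, div_pow]
    ring
  have hmse (μ σ : ℝ) : ∫ p, (p.1 - U p) ^ 2 ∂((gaussianReal μ ⟨σ ^ 2, sq_nonneg σ⟩).prod
      (gaussianReal 0 ⟨σW ^ 2, sq_nonneg σW⟩))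
        = (1 - K * A) ^ 2 * ((μ - μd) ^ 2 + σ ^ 2) + K ^ 2 * σW ^ 2 :=
    integral_sq_sub_affine_decoder_gaussianReal_prod μ μd A K _ _
  rw [hmse, hmse, hgain, hK, hA]
  constructor <;> field_simp <;> ring

theorem stmt14 (σe σd σW μe μd Pbar : ℝ)
    (hσe : 0 < σe) (hσd : 0 < σd) (hσW : 0 < σW) (hP : 0 < Pbar) :
    let δ : ℝ := μe - μd
    let A : ℝ := Real.sqrt (Pbar / (δ ^ 2 + σe ^ 2))
    let C : ℝ := -A * μd
    let K : ℝ := A * σd ^ 2 / (A ^ 2 * σd ^ 2 + σW ^ 2)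
    let L : ℝ := μd
    let U : ℝ × ℝ → ℝ := fun p => K * (A * p.1 + C + p.2) + L
    (∫ p, (p.1 - U p) ^ 2
        ∂((gaussianReal μe ⟨σe ^ 2, sq_nonneg σe⟩).prod
            (gaussianReal 0 ⟨σW ^ 2, sq_nonneg σW⟩))
      = σW ^ 2 * (Pbar * σd ^ 4 / (δ ^ 2 + σe ^ 2) + (δ ^ 2 + σe ^ 2) * σW ^ 2)
          / (Pbar * σd ^ 2 / (δ ^ 2 + σe ^ 2) + σW ^ 2) ^ 2)
    ∧ (∫ p, (p.1 - U p) ^ 2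
        ∂((gaussianReal μd ⟨σd ^ 2, sq_nonneg σd⟩).prod
            (gaussianReal 0 ⟨σW ^ 2, sq_nonneg σW⟩))
      = σd ^ 2 * σW ^ 2 / (Pbar * σd ^ 2 / (δ ^ 2 + σe ^ 2) + σW ^ 2)) :=
  stmt14_general σe σd σW μe μd Pbar hσe hσW hP
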